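/- Define real algebras A_i for i ≥ 0 inductively by A_0 = ℝ with conjugation ā = a, and A_{i+1} = A_i × A_i with multiplication (a,b)(c,d) = (ac − d·b̄, ā·d + c·b) and conjugation (a,b)‾ = (ā, −b). Then for every i ≥ 0 the algebra A_i is von-Neumann finite and reversible. -/
import Mathlib


/-- The underlying spaces of the algebras obtained from `ℝ` by the standard
Cayley–Dickson doubling process: `A 0 = ℝ`, `A (i+1) = A i × A i`. -/
def CayleyDickson : ℕ → Type
  | 0 => ℝ
  | (i + 1) => CayleyDickson i × CayleyDickson i

namespace CayleyDickson

def zero : (i : ℕ) → CayleyDickson i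
  | 0 => show ℝ from 0
  | (i + 1) => show CayleyDickson i × CayleyDickson i from (zero i, zero i)

def one : (i : ℕ) → CayleyDickson i
  | 0 => show ℝ from 1
  | (i + 1) => show CayleyDickson i × CayleyDickson i from (one i, zero i)

def add : (i : ℕ) → CayleyDickson i → CayleyDickson i → CayleyDickson i
  | 0, a, b => show ℝ from (show ℝ from a) + (show ℝ from b)
  | (i + 1), a, b =>
      show CayleyDickson i × CayleyDickson i from
        (add i (Prod.fst a) (Prod.fst b), add i (Prod.snd a) (Prod.snd b))

def neg : (i : ℕ) → CayleyDickson i → CayleyDickson i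
  | 0, a => show ℝ from -(show ℝ from a)
  | (i + 1), a =>
      show CayleyDickson i × CayleyDickson i from
        (neg i (Prod.fst a), neg i (Prod.snd a))

/-- Conjugation: on `ℝ` it is the identity, and `conj (a, b) = (conj a, -b)`. -/
def conj : (i : ℕ) → CayleyDickson i → CayleyDickson i
  | 0, a => a
  | (i + 1), a =>
      show CayleyDickson i × CayleyDickson i from
        (conj i (Prod.fst a), neg i (Prod.snd a))

/-- Multiplication: `(a, b) * (c, d) = (a*c - d * conj b, conj a * d + c * b)`. -/
def mul : (i : ℕ) → CayleyDickson i → CayleyDickson i → CayleyDickson i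
  | 0, a, b => show ℝ from (show ℝ from a) * (show ℝ from b)
  | (i + 1), x, y =>
      show CayleyDickson i × CayleyDickson i from
        (add i (mul i (Prod.fst x) (Prod.fst y))
               (neg i (mul i (Prod.snd y) (conj i (Prod.snd x)))),
         add i (mul i (conj i (Prod.fst x)) (Prod.snd y))
               (mul i (Prod.fst y) (Prod.snd x)))

end CayleyDickson

namespace CayleyDickson

instance instACG : ∀ i, AddCommGroup (CayleyDickson i)
  | 0 => inferInstanceAs (AddCommGroup ℝ)
  | (i+1) => letI := instACG i
      inferInstanceAs (AddCommGroup (CayleyDickson i × CayleyDickson i))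

noncomputable instance instMod : ∀ i, Module ℝ (CayleyDickson i)
  | 0 => inferInstanceAs (Module ℝ ℝ)
  | (i+1) => letI := instACG i; letI := instMod i
      inferInstanceAs (Module ℝ (CayleyDickson i × CayleyDickson i))

def fst {i : ℕ} (a : CayleyDickson (i+1)) : CayleyDickson i := Prod.fst a
def snd {i : ℕ} (a : CayleyDickson (i+1)) : CayleyDickson i := Prod.snd a
def pair {i : ℕ} (a b : CayleyDickson i) : CayleyDickson (i+1) :=
  show CayleyDickson i × CayleyDickson i from (a, b)

@[simp] lemma fst_pair {i} (a b : CayleyDickson i) : fst (pair a b) = a := rfl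
@[simp] lemma snd_pair {i} (a b : CayleyDickson i) : snd (pair a b) = b := rfl

lemma cd_ext {i} {a b : CayleyDickson (i+1)} (h1 : fst a = fst b) (h2 : snd a = snd b) :
    a = b := Prod.ext h1 h2

@[simp] lemma inst_add_succ {i} (a b : CayleyDickson (i+1)) :
    a + b = pair (fst a + fst b) (snd a + snd b) := rfl
@[simp] lemma inst_neg_succ {i} (a : CayleyDickson (i+1)) :
    -a = pair (-(fst a)) (-(snd a)) := rfl
@[simp] lemma inst_smul_succ {i} (r : ℝ) (a : CayleyDickson (i+1)) :
    r • a = pair (r • fst a) (r • snd a) := rfl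
@[simp] lemma inst_zero_succ {i} :
    (0 : CayleyDickson (i+1)) = pair 0 0 := rfl

lemma add_eq : ∀ i (a b : CayleyDickson i), add i a b = a + b
  | 0, a, b => rfl
  | (i+1), a, b => by
      show pair (add i (fst a) (fst b)) (add i (snd a) (snd b)) = _
      rw [add_eq, add_eq]; rfl

lemma neg_eq : ∀ i (a : CayleyDickson i), neg i a = -a
  | 0, a => rfl
  | (i+1), a => by
      show pair (neg i (fst a)) (neg i (snd a)) = _
      rw [neg_eq, neg_eq]; rfl

lemma zero_eq : ∀ i, zero i = 0
  | 0 => rfl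
  | (i+1) => by
      show pair (zero i) (zero i) = _
      rw [zero_eq]; rfl

@[simp] lemma one_succ {i} : one (i+1) = pair (one i) 0 := by
  show pair (one i) (zero i) = _; rw [zero_eq]

@[simp] lemma conj_succ {i} (a : CayleyDickson (i+1)) :
    conj (i+1) a = pair (conj i (fst a)) (-(snd a)) := by
  show pair (conj i (fst a)) (neg i (snd a)) = _; rw [neg_eq]

@[simp] lemma mul_succ {i} (x y : CayleyDickson (i+1)) :
    mul (i+1) x y = pair (mul i (fst x) (fst y) - mul i (snd y) (conj i (snd x)))
      (mul i (conj i (fst x)) (snd y) + mul i (fst y) (snd x)) := by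
  show pair (add i (mul i (fst x) (fst y)) (neg i (mul i (snd y) (conj i (snd x))))) _ = _
  rw [add_eq, add_eq, neg_eq, sub_eq_add_neg]; rfl

def B : ∀ i, CayleyDickson i → CayleyDickson i → ℝ
  | 0, a, b => 2 * (show ℝ from a) * (show ℝ from b)
  | (i+1), a, b => B i (fst a) (fst b) + B i (snd a) (snd b)

@[simp] lemma B_succ {i} (a b : CayleyDickson (i+1)) :
    B (i+1) a b = B i (fst a) (fst b) + B i (snd a) (snd b) := rfl

-- level 0 helper
def toR : CayleyDickson 0 → ℝ := fun a => a

example (x y : CayleyDickson 0) : mul 0 x (conj 0 y) + mul 0 y (conj 0 x) = B 0 x y • one 0 := by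
  show toR x * toR y + toR y * toR x = (2 * toR x * toR y) • (1:ℝ)
  rw [smul_eq_mul]; ring

-- B bilinearity
lemma B_add_left : ∀ i (a a' b : CayleyDickson i), B i (a + a') b = B i a b + B i a' b
  | 0, a, a', b => by
      show 2 * (toR a + toR a') * toR b = 2 * toR a * toR b + 2 * toR a' * toR b
      ring
  | (i+1), a, a', b => by
      simp [B_add_left i]; ring

lemma B_smul_left : ∀ i (r : ℝ) (a b : CayleyDickson i), B i (r • a) b = r * B i a b
  | 0, r, a, b => by
      show 2 * (r * toR a) * toR b = r * (2 * toR a * toR b)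
      ring
  | (i+1), r, a, b => by
      simp [B_smul_left i]; ring

lemma B_symm : ∀ i (a b : CayleyDickson i), B i a b = B i b a
  | 0, a, b => by show 2 * toR a * toR b = 2 * toR b * toR a; ring
  | (i+1), a, b => by simp [B_symm i (fst a), B_symm i (snd a)]

lemma B_add_right (i) (a b b' : CayleyDickson i) : B i a (b + b') = B i a b + B i a b' := by
  rw [B_symm, B_add_left, B_symm i b a, B_symm i b' a]

lemma B_smul_right (i) (r : ℝ) (a b : CayleyDickson i) : B i a (r • b) = r * B i a b := by
  rw [B_symm, B_smul_left, B_symm]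

lemma B_zero_left (i) (b : CayleyDickson i) : B i 0 b = 0 := by
  have := B_smul_left i 0 0 b; rwa [zero_smul, zero_mul] at this

lemma B_zero_right (i) (a : CayleyDickson i) : B i a 0 = 0 := by
  rw [B_symm, B_zero_left]

lemma B_neg_left (i) (a b : CayleyDickson i) : B i (-a) b = -(B i a b) := by
  have := B_smul_left i (-1) a b; rwa [neg_one_smul, neg_one_mul] at this

lemma B_neg_right (i) (a b : CayleyDickson i) : B i a (-b) = -(B i a b) := by
  rw [B_symm, B_neg_left, B_symm]

lemma B_sub_left (i) (a a' b : CayleyDickson i) : B i (a - a') b = B i a b - B i a' b := by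
  rw [sub_eq_add_neg, B_add_left, B_neg_left, sub_eq_add_neg]

lemma B_sub_right (i) (a b b' : CayleyDickson i) : B i a (b - b') = B i a b - B i a b' := by
  rw [B_symm, B_sub_left, B_symm i b a, B_symm i b' a]

lemma B_self_nonneg : ∀ i (a : CayleyDickson i), 0 ≤ B i a a
  | 0, a => by show (0:ℝ) ≤ 2 * toR a * toR a; nlinarith [sq_nonneg (toR a)]
  | (i+1), a => by
      have h1 := B_self_nonneg i (fst a); have h2 := B_self_nonneg i (snd a)
      simp; linarith

lemma eq_zero_of_B_self : ∀ i (a : CayleyDickson i), B i a a = 0 → a = 0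
  | 0, a, h => by
      have : 2 * toR a * toR a = 0 := h
      have : toR a = 0 := by nlinarith [sq_nonneg (toR a)]
      show toR a = (0:ℝ); exact this
  | (i+1), a, h => by
      have h1 := B_self_nonneg i (fst a); have h2 := B_self_nonneg i (snd a)
      simp at h
      have e1 : fst a = 0 := eq_zero_of_B_self i _ (by linarith)
      have e2 : snd a = 0 := eq_zero_of_B_self i _ (by linarith)
      exact cd_ext (by simpa using e1) (by simpa using e2)

-- conj lemmas
lemma conj_add : ∀ i (a b : CayleyDickson i), conj i (a + b) = conj i a + conj i b
  | 0, a, b => rfl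
  | (i+1), a, b => by
      apply cd_ext <;> simp [conj_add i]; abel

lemma conj_smul : ∀ i (r : ℝ) (a : CayleyDickson i), conj i (r • a) = r • conj i a
  | 0, r, a => rfl
  | (i+1), r, a => by apply cd_ext <;> simp [conj_smul i]

lemma conj_neg (i) (a : CayleyDickson i) : conj i (-a) = -(conj i a) := by
  rw [← neg_one_smul ℝ a, conj_smul, neg_one_smul]

lemma conj_zero (i) : conj i (0 : CayleyDickson i) = 0 := by
  have := conj_smul i 0 0; rwa [zero_smul, zero_smul] at this

lemma conj_conj : ∀ i (a : CayleyDickson i), conj i (conj i a) = a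
  | 0, a => rfl
  | (i+1), a => by apply cd_ext <;> simp [conj_conj i]

lemma conj_one : ∀ i, conj i (one i) = one i
  | 0 => rfl
  | (i+1) => by apply cd_ext <;> simp [conj_one i, conj_zero]

-- mul linearity (left/right are mutually recursive through conj in the doubling)
lemma mul_add_both : ∀ i, (∀ a a' b : CayleyDickson i, mul i (a + a') b = mul i a b + mul i a' b)
    ∧ (∀ a b b' : CayleyDickson i, mul i a (b + b') = mul i a b + mul i a b')
  | 0 => ⟨fun a a' b => by
      show (toR a + toR a') * toR b = toR a * toR b + toR a' * toR b; ring,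
    fun a b b' => by
      show toR a * (toR b + toR b') = toR a * toR b + toR a * toR b'; ring⟩
  | (i+1) => by
      obtain ⟨hl, hr⟩ := mul_add_both i
      constructor
      · intro a a' b
        apply cd_ext <;> simp [hl, hr, conj_add] <;> abel
      · intro a b b'
        apply cd_ext <;> simp [hl, hr] <;> abel

lemma mul_smul_both : ∀ i, (∀ (r : ℝ) (a b : CayleyDickson i), mul i (r • a) b = r • mul i a b)
    ∧ (∀ (r : ℝ) (a b : CayleyDickson i), mul i a (r • b) = r • mul i a b)
  | 0 => ⟨fun r a b => by
      show (r * toR a) * toR b = r * (toR a * toR b); ring,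
    fun r a b => by
      show toR a * (r * toR b) = r * (toR a * toR b); ring⟩
  | (i+1) => by
      obtain ⟨hl, hr⟩ := mul_smul_both i
      constructor
      · intro r a b
        apply cd_ext <;> simp [hl, hr, conj_smul] <;> module
      · intro r a b
        apply cd_ext <;> simp [hl, hr, conj_smul] <;> module

lemma mul_add_left (i) (a a' b : CayleyDickson i) :
    mul i (a + a') b = mul i a b + mul i a' b := (mul_add_both i).1 a a' b
lemma mul_add_right (i) (a b b' : CayleyDickson i) :
    mul i a (b + b') = mul i a b + mul i a b' := (mul_add_both i).2 a b b'
lemma mul_smul_left (i) (r : ℝ) (a b : CayleyDickson i) :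
    mul i (r • a) b = r • mul i a b := (mul_smul_both i).1 r a b
lemma mul_smul_right (i) (r : ℝ) (a b : CayleyDickson i) :
    mul i a (r • b) = r • mul i a b := (mul_smul_both i).2 r a b

lemma mul_neg_left (i) (a b : CayleyDickson i) : mul i (-a) b = -(mul i a b) := by
  rw [← neg_one_smul ℝ a, mul_smul_left, neg_one_smul]

lemma mul_neg_right (i) (a b : CayleyDickson i) : mul i a (-b) = -(mul i a b) := by
  rw [← neg_one_smul ℝ b, mul_smul_right, neg_one_smul]

lemma mul_zero_left (i) (b : CayleyDickson i) : mul i 0 b = 0 := by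
  have := mul_smul_left i 0 0 b; rwa [zero_smul, zero_smul] at this

lemma mul_zero_right (i) (a : CayleyDickson i) : mul i a 0 = 0 := by
  have := mul_smul_right i 0 a 0; rwa [zero_smul, zero_smul] at this

lemma mul_sub_right (i) (a b b' : CayleyDickson i) :
    mul i a (b - b') = mul i a b - mul i a b' := by
  rw [sub_eq_add_neg, mul_add_right, mul_neg_right, sub_eq_add_neg]

lemma mul_one_left : ∀ i (b : CayleyDickson i), mul i (one i) b = b
  | 0, b => by show (1:ℝ) * toR b = toR b; ring
  | (i+1), b => by
      apply cd_ext <;>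
        simp [mul_one_left i, conj_zero, conj_one, mul_zero_right, mul_zero_left]

lemma mul_one_right : ∀ i (a : CayleyDickson i), mul i a (one i) = a
  | 0, a => by show toR a * (1:ℝ) = toR a; ring
  | (i+1), a => by
      apply cd_ext <;>
        simp [mul_one_right i, mul_one_left i, conj_zero, mul_zero_right, mul_zero_left]

lemma B_one_one : ∀ i, B i (one i) (one i) = 2
  | 0 => by show 2 * (1:ℝ) * 1 = 2; ring
  | (i+1) => by simp [B_one_one i, B_zero_left]

/-- `x ȳ + y x̄ = B(x,y)·1` -/
lemma N1 : ∀ i (x y : CayleyDickson i),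
    mul i x (conj i y) + mul i y (conj i x) = B i x y • one i
  | 0, x, y => by
      show toR x * toR y + toR y * toR x = (2 * toR x * toR y) • (1:ℝ)
      rw [smul_eq_mul]; ring
  | (i+1), x, y => by
      have h1 := N1 i (fst x) (fst y)
      have h2 := N1 i (snd x) (snd y)
      apply cd_ext
      · simp only [mul_succ, conj_succ, inst_add_succ, inst_smul_succ, fst_pair, snd_pair,
          one_succ, mul_neg_left, mul_neg_right, B_succ]
        rw [add_smul, ← h1, ← h2]; abel
      · simp only [mul_succ, conj_succ, inst_add_succ, inst_smul_succ, fst_pair, snd_pair,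
          one_succ, mul_neg_left, mul_neg_right, smul_zero]
        abel

/-- `x̄ y + ȳ x = B(x,y)·1` -/
lemma N2 : ∀ i (x y : CayleyDickson i),
    mul i (conj i x) y + mul i (conj i y) x = B i x y • one i
  | 0, x, y => by
      show toR x * toR y + toR y * toR x = (2 * toR x * toR y) • (1:ℝ)
      rw [smul_eq_mul]; ring
  | (i+1), x, y => by
      have h1 := N2 i (fst x) (fst y)
      have h2 := N1 i (snd x) (snd y)
      apply cd_ext
      · simp only [mul_succ, conj_succ, inst_add_succ, inst_smul_succ, fst_pair, snd_pair,
          one_succ, mul_neg_left, mul_neg_right, conj_conj, conj_neg, B_succ]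
        rw [add_smul, ← h1, ← h2]; abel
      · simp only [mul_succ, conj_succ, inst_add_succ, inst_smul_succ, fst_pair, snd_pair,
          one_succ, mul_neg_left, mul_neg_right, conj_conj, conj_neg, smul_zero]
        abel

/-- trace: `x + x̄ = B(x,1)·1` -/
lemma traceId : ∀ i (x : CayleyDickson i), x + conj i x = B i x (one i) • one i
  | 0, x => by
      show toR x + toR x = (2 * toR x * 1) • (1:ℝ)
      rw [smul_eq_mul]; ring
  | (i+1), x => by
      apply cd_ext
      · simp [traceId i (fst x), B_zero_right]
      · simp

/-- adjoint identities for left/right multiplication -/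
lemma adj : ∀ i, (∀ x y z : CayleyDickson i, B i (mul i x y) z = B i y (mul i (conj i x) z))
    ∧ (∀ x y z : CayleyDickson i, B i (mul i x y) z = B i x (mul i z (conj i y)))
  | 0 => ⟨fun x y z => by
      show 2 * (toR x * toR y) * toR z = 2 * toR y * (toR x * toR z); ring,
    fun x y z => by
      show 2 * (toR x * toR y) * toR z = 2 * toR x * (toR z * toR y); ring⟩
  | (i+1) => by
      obtain ⟨hL, hR⟩ := adj i
      constructor
      · intro x y z
        have l1 : B i (mul i (fst x) (fst y)) (fst z)
            = B i (fst y) (mul i (conj i (fst x)) (fst z)) := hL _ _ _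
        have l2 : B i (mul i (snd y) (conj i (snd x))) (fst z)
            = B i (snd y) (mul i (fst z) (snd x)) := by
          rw [hR _ _ _, conj_conj]
        have l3 : B i (mul i (conj i (fst x)) (snd y)) (snd z)
            = B i (snd y) (mul i (fst x) (snd z)) := by
          rw [hL _ _ _, conj_conj]
        have l4 : B i (mul i (fst y) (snd x)) (snd z)
            = B i (fst y) (mul i (snd z) (conj i (snd x))) := hR _ _ _
        simp only [mul_succ, conj_succ, B_succ, fst_pair, snd_pair, conj_neg, conj_conj,
          mul_neg_left, mul_neg_right, B_sub_left, B_sub_right, B_add_left, B_add_right,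
          B_neg_left, B_neg_right, sub_eq_add_neg, l1, l2, l3, l4]
        ring
      · intro x y z
        have e1 : B i (mul i (fst x) (fst y)) (fst z)
            = B i (fst x) (mul i (fst z) (conj i (fst y))) := hR _ _ _
        have e2 : B i (mul i (snd y) (conj i (snd x))) (fst z)
            = B i (snd x) (mul i (conj i (fst z)) (snd y)) :=
          calc B i (mul i (snd y) (conj i (snd x))) (fst z)
              = B i (snd y) (mul i (fst z) (conj i (conj i (snd x)))) := hR _ _ _
            _ = B i (snd y) (mul i (fst z) (snd x)) := by rw [conj_conj]
            _ = B i (mul i (fst z) (snd x)) (snd y) := B_symm _ _ _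
            _ = B i (snd x) (mul i (conj i (fst z)) (snd y)) := hL _ _ _
        have e3 : B i (mul i (conj i (fst x)) (snd y)) (snd z)
            = B i (fst x) (mul i (snd y) (conj i (snd z))) :=
          calc B i (mul i (conj i (fst x)) (snd y)) (snd z)
              = B i (snd y) (mul i (conj i (conj i (fst x))) (snd z)) := hL _ _ _
            _ = B i (snd y) (mul i (fst x) (snd z)) := by rw [conj_conj]
            _ = B i (mul i (fst x) (snd z)) (snd y) := B_symm _ _ _
            _ = B i (fst x) (mul i (snd y) (conj i (snd z))) := hR _ _ _
        have e4 : B i (mul i (fst y) (snd x)) (snd z)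
            = B i (snd x) (mul i (conj i (fst y)) (snd z)) := hL _ _ _
        simp only [mul_succ, conj_succ, B_succ, fst_pair, snd_pair, conj_neg, conj_conj,
          mul_neg_left, mul_neg_right, B_sub_left, B_sub_right, B_add_left, B_add_right,
          B_neg_left, B_neg_right, sub_eq_add_neg, e1, e2, e3, e4]
        ring

/-- master formula : `ba = B(b,1)·a + B(a,1)·b − ab − B(a,b)·1`. -/
lemma master (i) (a b : CayleyDickson i) :
    mul i b a = B i b (one i) • a + B i a (one i) • b - mul i a b - B i a b • one i := by
  have tb : conj i b = B i b (one i) • one i - b := eq_sub_of_add_eq' (traceId i b)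
  have ta : conj i a = B i a (one i) • one i - a := eq_sub_of_add_eq' (traceId i a)
  have n := N1 i a b
  rw [tb, ta, mul_sub_right, mul_sub_right, mul_smul_right, mul_smul_right,
    mul_one_right, mul_one_right] at n
  rw [← n]; abel

end CayleyDickson

open CayleyDickson

/-- Every algebra obtained from `ℝ` by the standard Cayley–Dickson doubling process is
von-Neumann finite and reversible. -/
theorem cayleyDickson_vonNeumannFinite_and_reversible (i : ℕ) :
    (∀ a b : CayleyDickson i,
      CayleyDickson.mul i a b = CayleyDickson.one i →
        CayleyDickson.mul i b a = CayleyDickson.one i) ∧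
    (∀ a b : CayleyDickson i,
      CayleyDickson.mul i a b = CayleyDickson.zero i →
         CayleyDickson.mul i b a = CayleyDickson.zero i) := by
  have hqa : ∀ a : CayleyDickson i,
      mul i (conj i a) a + mul i (conj i a) a = B i a a • one i := fun a => N2 i a a
  have hqa' : ∀ a : CayleyDickson i,
      mul i a (conj i a) + mul i a (conj i a) = B i a a • one i := fun a => N1 i a a
  constructor
  · intro a b h
    -- notation
    have key1 : 2 * B i a (one i) = B i a a * B i b (one i) := by
      have e := (adj i).1 a b a
      rw [h] at e
      have : 2 * B i b (mul i (conj i a) a) = B i a a * B i b (one i) := by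
        rw [two_mul, ← B_add_right, hqa a, B_smul_right]
      rw [← e, B_symm i (one i) a] at this
      exact this
    have key2 : 2 * B i b (one i) = B i b b * B i a (one i) := by
      have e := (adj i).2 a b b
      rw [h] at e
      have : 2 * B i a (mul i b (conj i b)) = B i b b * B i a (one i) := by
        rw [two_mul, ← B_add_right, hqa' b, B_smul_right]
      rw [← e, B_symm i (one i) b] at this
      exact this
    have hab : B i a b = B i a (one i) * B i b (one i) - 2 := by
      have e := (adj i).2 a b (one i)
      rw [h, mul_one_left, B_one_one] at e
      have tb : conj i b = B i b (one i) • one i - b := eq_sub_of_add_eq' (traceId i b)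
      rw [tb, B_sub_right, B_smul_right] at e
      have h1 : B i a (one i) * B i b (one i) - B i a b = 2 := by linarith
      linarith
    have hc : B i b (one i) • a + B i a (one i) • b
        - (B i a (one i) * B i b (one i)) • one i = 0 := by
      apply eq_zero_of_B_self
      simp only [B_sub_left, B_sub_right, B_add_left, B_add_right, B_smul_left, B_smul_right,
        B_one_one, B_symm i b a, B_symm i (one i) a, B_symm i (one i) b, hab]
      linear_combination (-(B i b (one i))) * key1 + (-(B i a (one i))) * key2
    have hc' : B i b (one i) • a + B i a (one i) • b
        = (B i a (one i) * B i b (one i)) • one i := by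
      rwa [sub_eq_zero] at hc
    rw [master i a b, h, hab]
    rw [show B i b (one i) • a + B i a (one i) • b - one i
        - (B i a (one i) * B i b (one i) - 2) • one i
        = (B i b (one i) • a + B i a (one i) • b)
          - (B i a (one i) * B i b (one i)) • one i + (2:ℝ) • one i - one i by module,
      hc', sub_self, zero_add, two_smul]
    abel
  · intro a b h
    rw [zero_eq] at h ⊢
    by_cases ha : a = 0
    · rw [ha, mul_zero_right]
    by_cases hb : b = 0
    · rw [hb, mul_zero_left]
    have haa : B i a a ≠ 0 := fun hz => ha (eq_zero_of_B_self i a hz)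
    have hbb : B i b b ≠ 0 := fun hz => hb (eq_zero_of_B_self i b hz)
    have htb : B i b (one i) = 0 := by
      have e := (adj i).1 a b a
      rw [h, B_zero_left] at e
      have e2 : 2 * B i b (mul i (conj i a) a) = B i a a * B i b (one i) := by
        rw [two_mul, ← B_add_right, hqa a, B_smul_right]
      rw [← e, mul_zero] at e2
      exact by
        rcases mul_eq_zero.1 e2.symm with h' | h'
        · exact absurd h' haa
        · exact h'
    have hta : B i a (one i) = 0 := by
      have e := (adj i).2 a b b
      rw [h, B_zero_left] at e
      have e2 : 2 * B i a (mul i b (conj i b)) = B i b b * B i a (one i) := by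
        rw [two_mul, ← B_add_right, hqa' b, B_smul_right]
      rw [← e, mul_zero] at e2
      exact by
        rcases mul_eq_zero.1 e2.symm with h' | h'
        · exact absurd h' hbb
        · exact h'
    have hab : B i a b = 0 := by
      have e := (adj i).2 a b (one i)
      rw [h, B_zero_left, mul_one_left] at e
      have tb : conj i b = B i b (one i) • one i - b := eq_sub_of_add_eq' (traceId i b)
      rw [tb, B_sub_right, B_smul_right, htb, zero_mul] at e
      linarith
    rw [master i a b, h, hab, hta, htb]
    simp
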